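/- A tree T does not admit a perfect matching if and only if Staller has a winning strategy in the Staller-start Maker-Breaker domination game on T (i.e., γ'_SMB(T) < ∞). -/

import Mathlib

open scoped Classical

open scoped Classical

noncomputable section

/-- Minimax value of the Maker–Breaker game on hypergraph with edge set `E`:
`mbVal E t M B` is the minimum number of further moves Maker needs to claim all
vertices of some hyperedge (Maker has claimed `M`, Breaker has claimed `B`,
`t = true` iff Maker moves next), under optimal play; `⊤` if Maker cannot win. -/
def mbVal {V : Type} [Fintype V] (E : Set (Finset V)) :
    Bool → Finset V → Finset V → ℕ∞
  | true, M, B =>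
      if ∃ e ∈ E, e ⊆ M then 0
      else ⨅ v ∈ Finset.univ \ (M ∪ B), (1 + mbVal E false (insert v M) B)
  | false, M, B =>
      if ∃ e ∈ E, e ⊆ M then 0
      else if Finset.univ \ (M ∪ B) = ∅ then ⊤
      else ⨆ v ∈ Finset.univ \ (M ∪ B), mbVal E true M (insert v B)
termination_by _t M B => (Finset.univ \ (M ∪ B)).card
decreasing_by
  all_goals
    apply Finset.card_lt_card
    rw [Finset.ssubset_iff_of_subset]
    · refine ⟨v, ‹_›, by simp⟩
    · intro x hx
      simp only [Finset.mem_sdiff, Finset.mem_univ, true_and, Finset.mem_union,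
        Finset.mem_insert] at hx ⊢
      tauto

/-- The closed neighborhood of `v` as a finset. -/
def closedNbhdFinset {V : Type} [Fintype V] (G : SimpleGraph V) (v : V) : Finset V :=
  Finset.univ.filter (fun w => w = v ∨ G.Adj v w)

/-- The closed neighborhood hypergraph of a graph. -/
def nbhdHyp {V : Type} [Fintype V] (G : SimpleGraph V) : Set (Finset V) :=
  Set.range (closedNbhdFinset G)

/-- `γ'_SMB(G)`: the number of moves Staller (= Maker on the closed neighborhood
hypergraph, moving first) needs to win the Maker–Breaker domination game on `G`. -/
def gammaSMB' {V : Type} [Fintype V] (G : SimpleGraph V) : ℕ∞ :=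
  mbVal (nbhdHyp G) true ∅ ∅

end

/-!
If `T` has a perfect matching, Dominator wins by pairing: every closed neighbourhood `N[v]`
contains `v` and its partner, and Dominator answers each move of Staller by the partner.

Conversely, let `S` be a set of vertices of a forest whose induced subgraph has no perfect
matching. Some `ℓ ∈ S` has at most one neighbour in `S`. If it has none, Staller claims `ℓ`.
Otherwise Staller claims its neighbour `s`, which forces Dominator to answer `ℓ`; from then on every
neighbourhood in `S \ {ℓ, s}` is, up to the claimed `s`, a neighbourhood in `S`, and
`S \ {ℓ, s}` has no perfect matching either, so Staller wins by induction.
-/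

open Finset

section MakerBreaker

variable {V : Type} [Fintype V] {E F : Set (Finset V)} {M B : Finset V}

theorem mbVal_true (E : Set (Finset V)) (M B : Finset V) :
    mbVal E true M B = if ∃ e ∈ E, e ⊆ M then 0
      else ⨅ v ∈ univ \ (M ∪ B), (1 + mbVal E false (insert v M) B) := by
  rw [mbVal]

theorem mbVal_false (E : Set (Finset V)) (M B : Finset V) :
    mbVal E false M B = if ∃ e ∈ E, e ⊆ M then 0
      else if univ \ (M ∪ B) = ∅ then ⊤
      else ⨆ v ∈ univ \ (M ∪ B), mbVal E true M (insert v B) := by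
  rw [mbVal]

lemma mbVal_eq_zero_of_subset {e : Finset V} (he : e ∈ E) (hsub : e ⊆ M) (t : Bool) :
    mbVal E t M B = 0 := by
  cases t <;> rw [mbVal] <;> exact if_pos ⟨e, he, hsub⟩

lemma univ_sdiff_insert_union {v : V} : univ \ (insert v M ∪ B) = (univ \ (M ∪ B)).erase v := by
  ext; simp

lemma univ_sdiff_union_insert {v : V} : univ \ (M ∪ insert v B) = (univ \ (M ∪ B)).erase v := by
  rw [union_comm, univ_sdiff_insert_union, union_comm]

lemma mbVal_true_le {v : V} (hv : v ∈ univ \ (M ∪ B)) :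
    mbVal E true M B ≤ 1 + mbVal E false (insert v M) B := by
  rw [mbVal_true]
  split_ifs
  · exact zero_le
  · exact iInf₂_le v hv

lemma mbVal_true_le_one {v : V} {e : Finset V} (hv : v ∈ univ \ (M ∪ B)) (he : e ∈ E)
    (hsub : e ⊆ insert v M) : mbVal E true M B ≤ 1 := by
  refine (mbVal_true_le hv).trans_eq ?_
  rw [mbVal_eq_zero_of_subset he hsub, add_zero]

lemma mbVal_false_lt_top (hfree : (univ \ (M ∪ B)).Nonempty)
    (h : ∀ u ∈ univ \ (M ∪ B), mbVal E true M (insert u B) < ⊤) : mbVal E false M B < ⊤ := by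
  rw [mbVal_false]
  split_ifs with _ hempty
  · exact ENat.natCast_lt_top 0
  · exact absurd hempty hfree.ne_empty
  · rw [← Finset.sup_eq_iSup]
    exact Finset.sup_lt_iff WithTop.top_pos |>.mpr h

/-- Strategy transfer: with the same free vertices, Maker replays her `F`-strategy, and every
`F`-edge she completes completes an `E`-edge together with her extra vertices `M`. -/
theorem mbVal_le_of_sdiff_eq {M' B' : Finset V} (hEF : ∀ f ∈ F, ∃ e ∈ E, e ⊆ f ∪ M)
    (hM : M' ⊆ M) (hfree : univ \ (M ∪ B) = univ \ (M' ∪ B')) (t : Bool) :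
    mbVal E t M B ≤ mbVal F t M' B' := by
  induction hn : #(univ \ (M ∪ B)) using Nat.strong_induction_on generalizing t M B M' B' with
  | _ n ih =>
  by_cases hE : ∃ e ∈ E, e ⊆ M
  · obtain ⟨e, he, hsub⟩ := hE
    exact (mbVal_eq_zero_of_subset he hsub t).trans_le zero_le
  have hF : ¬∃ f ∈ F, f ⊆ M' := by
    rintro ⟨f, hf, hsub⟩
    obtain ⟨e, he, hef⟩ := hEF f hf
    exact hE ⟨e, he, hef.trans (union_subset (hsub.trans hM) subset_rfl)⟩
  have hlt {v : V} (hv : v ∈ univ \ (M ∪ B)) : #((univ \ (M ∪ B)).erase v) < n :=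
    hn ▸ card_erase_lt_of_mem hv
  cases t
  · rw [mbVal_false, mbVal_false, if_neg hE, if_neg hF, ← hfree]
    split_ifs
    · exact le_rfl
    · refine iSup₂_mono fun u hu => ih _ (hlt hu) hEF hM ?_ _ (by rw [univ_sdiff_union_insert])
      rw [univ_sdiff_union_insert, univ_sdiff_union_insert, hfree]
  · rw [mbVal_true, mbVal_true, if_neg hE, if_neg hF, ← hfree]
    refine iInf₂_mono fun v hv => add_le_add_right ?_ 1
    refine ih _ (hlt hv) (fun f hf => ?_) (insert_subset_insert v hM) ?_ _
      (by rw [univ_sdiff_insert_union])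
    · obtain ⟨e, he, hef⟩ := hEF f hf
      exact ⟨e, he, hef.trans (union_subset_union subset_rfl (subset_insert v M))⟩
    · rw [univ_sdiff_insert_union, univ_sdiff_insert_union, hfree]

end MakerBreaker

section Pairing

variable {V : Type} {E : Set (Finset V)} {M B : Finset V} {f : V → V}

lemma not_exists_subset_of_pairing (hE : ∀ e ∈ E, ∃ v ∈ e, f v ∈ e) (hM : ∀ v ∈ M, f v ∉ M) :
    ¬∃ e ∈ E, e ⊆ M := by
  rintro ⟨e, he, hsub⟩
  obtain ⟨v, hv, hfv⟩ := hE e he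
  exact hM v (hsub hv) (hsub hfv)

lemma pairing_insert [DecidableEq V] (hf : Function.Involutive f) (hfix : ∀ v, f v ≠ v)
    (hMB : Disjoint M B) (hpair : ∀ v ∈ M, f v ∈ B) {x : V} (hxB : x ∉ B) :
    ∀ v ∈ insert x M, f v ∉ insert x M ∧ f v ∈ insert (f x) B := by
  intro v hv
  rcases mem_insert.mp hv with rfl | hv
  · have hfvM : f v ∉ M := fun h => hxB (hf v ▸ hpair _ h)
    simp [hfix v, hfvM]
  · have hfvx : f v ≠ x := fun h => hxB (h ▸ hpair v hv)
    simp [hfvx, hpair v hv, disjoint_right.mp hMB (hpair v hv)]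

/-- Pairing strategy: Breaker answers each Maker move `x` by `f x`. -/
theorem mbVal_eq_top_of_pairing [Fintype V] (hf : Function.Involutive f) (hfix : ∀ v, f v ≠ v)
    (hE : ∀ e ∈ E, ∃ v ∈ e, f v ∈ e) (hMB : Disjoint M B) (hpair : ∀ v ∈ M, f v ∈ B) :
    mbVal E true M B = ⊤ := by
  induction hn : #(univ \ (M ∪ B)) using Nat.strong_induction_on generalizing M B with
  | _ n ih =>
  rw [mbVal_true, if_neg (not_exists_subset_of_pairing hE
    fun v hv hfv => disjoint_left.mp hMB hfv (hpair v hv))]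
  refine iInf₂_eq_top.mpr fun x hx => ?_
  have hxMB : x ∉ M ∧ x ∉ B := by simpa using hx
  have hins := pairing_insert hf hfix hMB hpair hxMB.2
  suffices mbVal E false (insert x M) B = ⊤ by rw [this, add_top]
  rw [mbVal_false, if_neg (not_exists_subset_of_pairing hE fun v hv => (hins v hv).1)]
  split_ifs with hempty
  · rfl
  obtain ⟨y, hy, hxy⟩ : ∃ y ∈ univ \ (insert x M ∪ B), insert (f x) B ⊆ insert y B := by
    by_cases hfx : f x ∈ univ \ (insert x M ∪ B)
    · exact ⟨f x, hfx, subset_rfl⟩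
    · obtain ⟨y, hy⟩ := nonempty_iff_ne_empty.mpr hempty
      have hfxB : f x ∈ B := by
        simpa [not_or.mp (mem_insert.not.mp (hins x (mem_insert_self x M)).1)] using hfx
      exact ⟨y, hy, insert_subset (mem_insert_of_mem hfxB) (subset_insert y B)⟩
  have hyxMB : y ≠ x ∧ y ∉ M ∧ y ∉ B := by simpa using hy
  refine eq_top_iff.mpr <| le_iSup₂_of_le y hy <|
    (ih _ ?_ ?_ (fun v hv => hxy (hins v hv).2) rfl).ge
  · rw [univ_sdiff_union_insert, univ_sdiff_insert_union, ← hn]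
    exact card_erase_le.trans_lt (card_erase_lt_of_mem hx)
  · simp only [disjoint_insert_left, disjoint_insert_right, mem_insert, not_or]
    exact ⟨⟨hyxMB.1, hyxMB.2.1⟩, hxMB.2, hMB⟩

end Pairing

namespace SimpleGraph

variable {V : Type} {G : SimpleGraph V}

theorem IsAcyclic.exists_mem_neighborSet_inter_subsingleton (hG : G.IsAcyclic) {S : Finset V}
    (hS : S.Nonempty) : ∃ ℓ ∈ S, (G.neighborSet ℓ ∩ S).Subsingleton := by
  by_contra! hbranch
  have hpath (n : ℕ) : ∃ (u v : V) (p : G.Walk u v), p.IsPath ∧ p.length = n ∧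
      ∀ x ∈ p.support, x ∈ S := by
    induction n with
    | zero =>
      obtain ⟨u, hu⟩ := hS
      exact ⟨u, u, .nil, .nil, rfl, by simpa using hu⟩
    | succ n ih =>
      obtain ⟨u, v, p, hp, hlen, hpS⟩ := ih
      obtain ⟨w, ⟨hadj, hwS⟩, hw⟩ : ∃ w ∈ G.neighborSet u ∩ S, w ≠ p.snd := by
        obtain ⟨a, ha, b, hb, hab⟩ := hbranch u (hpS u p.start_mem_support)
        by_cases hap : a = p.snd
        · exact ⟨b, hb, fun h => hab (hap.trans h.symm)⟩
        · exact ⟨a, ha, hap⟩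
      have hwp : w ∉ p.support := fun h => hw (hG.eq_snd_of_adj_start hp hadj h)
      refine ⟨w, v, .cons hadj.symm p, hp.cons hwp, by simp [hlen], ?_⟩
      simp only [Walk.support_cons, List.mem_cons, forall_eq_or_imp]
      exact ⟨hwS, hpS⟩
  obtain ⟨u, v, p, hp, hlen, hpS⟩ := hpath #S
  have := card_le_card (s := p.support.toFinset) fun x hx => hpS x (List.mem_toFinset.mp hx)
  rw [List.toFinset_card_of_nodup hp.support_nodup, Walk.length_support, hlen] at this
  omega

theorem Subgraph.IsMatching.sup_subgraphOfAdj {M : G.Subgraph} {u v : V} (hM : M.IsMatching)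
    (h : G.Adj u v) (hu : u ∉ M.verts) (hv : v ∉ M.verts) :
    (M ⊔ G.subgraphOfAdj h).IsMatching := by
  refine hM.sup (.subgraphOfAdj h) ?_
  rw [hM.support_eq_verts, support_subgraphOfAdj, Set.disjoint_insert_right,
    Set.disjoint_singleton_right]
  exact ⟨hu, hv⟩

theorem Subgraph.IsPerfectMatching.exists_involutive_adj {M : G.Subgraph}
    (hM : M.IsPerfectMatching) : ∃ f : V → V, Function.Involutive f ∧ ∀ v, M.Adj v (f v) := by
  rw [Subgraph.isPerfectMatching_iff] at hM
  choose f hf using fun v => (hM v).exists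
  exact ⟨f, fun v => (hM (f v)).unique (hf (f v)) (hf v).symm, hf⟩

end SimpleGraph

section DominationGame

variable {V : Type} [Fintype V] {G : SimpleGraph V} {S : Finset V} {ℓ s : V}

lemma mem_closedNbhdFinset {v w : V} : w ∈ closedNbhdFinset G v ↔ w = v ∨ G.Adj v w := by
  simp [closedNbhdFinset]

/-- Closed neighbourhoods in `G.induce S`, as subsets of `V`: together with Dominator holding `Sᶜ`
this encodes the domination game on the induced subgraph. -/
def closedNbhdHypOn (G : SimpleGraph V) (S : Finset V) : Set (Finset V) :=
  (fun v => closedNbhdFinset G v ∩ S) '' S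

lemma closedNbhdHypOn_univ : closedNbhdHypOn G univ = nbhdHyp G := by
  simp [closedNbhdHypOn, nbhdHyp]

lemma mbVal_closedNbhdHypOn_le_one_of_isolated (hℓ : ℓ ∈ S) (hiso : ∀ w ∈ S, ¬G.Adj ℓ w) :
    mbVal (closedNbhdHypOn G S) true ∅ Sᶜ ≤ 1 := by
  refine mbVal_true_le_one (v := ℓ) (by simpa using hℓ) ⟨ℓ, hℓ, rfl⟩ fun w hw => ?_
  obtain ⟨hℓw, hwS⟩ := mem_inter.mp hw
  rcases mem_closedNbhdFinset.mp hℓw with rfl | hadj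
  · exact mem_insert_self _ _
  · exact absurd hadj (hiso w hwS)

/-- Staller holds `s` and Dominator the leaf `ℓ`: since `ℓ` has no neighbour but `s`, the closed
neighbourhood in `S` of a vertex of `S \ {ℓ, s}` meets `{ℓ, s}` at most in `s`. -/
lemma mbVal_closedNbhdHypOn_le_of_leaf (hleaf : ∀ w ∈ S, G.Adj ℓ w → w = s) :
    mbVal (closedNbhdHypOn G S) true {s} (insert ℓ Sᶜ) ≤
      mbVal (closedNbhdHypOn G (S \ {ℓ, s})) true ∅ (S \ {ℓ, s})ᶜ := by
  refine mbVal_le_of_sdiff_eq ?_ (empty_subset _) ?_ true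
  · rintro _ ⟨v, hv, rfl⟩
    have hvS : v ∈ S ∧ v ≠ ℓ ∧ v ≠ s := by simpa [and_comm, and_assoc] using hv
    refine ⟨_, ⟨v, hvS.1, rfl⟩, fun w hw => ?_⟩
    obtain ⟨hvw, hwS⟩ := mem_inter.mp hw
    by_cases hws : w = s
    · simp [hws]
    have hwℓ : w ≠ ℓ := by
      rintro rfl
      rcases mem_closedNbhdFinset.mp hvw with rfl | hadj'
      · exact hvS.2.1 rfl
      · exact hvS.2.2 (hleaf v hvS.1 hadj'.symm)
    simp [hvw, hwS, hwℓ, hws]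
  · ext w
    simp only [mem_sdiff, mem_univ, mem_union, mem_singleton, mem_insert, mem_compl,
      empty_union, not_not, true_and, not_or]
    tauto

lemma mbVal_closedNbhdHypOn_lt_top_of_leaf (hℓ : ℓ ∈ S) (hs : s ∈ S) (hadj : G.Adj ℓ s)
    (hleaf : ∀ w ∈ S, G.Adj ℓ w → w = s)
    (hrest : mbVal (closedNbhdHypOn G (S \ {ℓ, s})) true ∅ (S \ {ℓ, s})ᶜ < ⊤) :
    mbVal (closedNbhdHypOn G S) true ∅ Sᶜ < ⊤ := by
  have hℓfree : ℓ ∈ univ \ (insert s ∅ ∪ Sᶜ) := by simp [hℓ, hadj.ne]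
  refine (mbVal_true_le (v := s) (by simpa using hs)).trans_lt <| WithTop.add_lt_top.mpr
    ⟨ENat.one_lt_top, mbVal_false_lt_top ⟨ℓ, hℓfree⟩ fun u hu => ?_⟩
  by_cases huℓ : u = ℓ
  · subst huℓ
    exact (mbVal_closedNbhdHypOn_le_of_leaf hleaf).trans_lt hrest
  · refine lt_of_le_of_lt (b := 1) ?_ ENat.one_lt_top
    have hℓfree' : ℓ ∈ univ \ (insert s ∅ ∪ insert u Sᶜ) := by
      rw [univ_sdiff_union_insert]
      exact mem_erase.mpr ⟨Ne.symm huℓ, hℓfree⟩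
    refine mbVal_true_le_one hℓfree' ⟨ℓ, hℓ, rfl⟩ fun w hw => ?_
    obtain ⟨hℓw, hwS⟩ := mem_inter.mp hw
    rcases mem_closedNbhdFinset.mp hℓw with rfl | hadj'
    · exact mem_insert_self _ _
    · simp [hleaf w hwS hadj']

theorem SimpleGraph.IsAcyclic.mbVal_closedNbhdHypOn_lt_top (hG : G.IsAcyclic) (S : Finset V)
    (hS : ¬∃ M : G.Subgraph, M.IsMatching ∧ M.verts = S) :
    mbVal (closedNbhdHypOn G S) true ∅ Sᶜ < ⊤ := by
  induction S using Finset.strongInduction with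
  | H S ih =>
  have hne : S.Nonempty := nonempty_iff_ne_empty.mpr <| by
    rintro rfl
    exact hS ⟨⊥, fun _ h => h.elim, by simp⟩
  obtain ⟨ℓ, hℓ, hsub⟩ := hG.exists_mem_neighborSet_inter_subsingleton hne
  by_cases hnbr : ∃ s ∈ S, G.Adj ℓ s
  · obtain ⟨s, hs, hadj⟩ := hnbr
    have hS' : S \ {ℓ, s} ⊂ S := sdiff_ssubset (by simp [insert_subset_iff, hℓ, hs]) (by simp)
    refine mbVal_closedNbhdHypOn_lt_top_of_leaf hℓ hs hadj
      (fun w hw hw' => hsub ⟨hw', hw⟩ ⟨hadj, hs⟩) (ih _ hS' ?_)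
    rintro ⟨M, hM, hverts⟩
    exact hS ⟨_, hM.sup_subgraphOfAdj hadj (by simp [hverts]) (by simp [hverts]),
      by ext; simp [hverts]; grind⟩
  · push Not at hnbr
    exact (mbVal_closedNbhdHypOn_le_one_of_isolated hℓ hnbr).trans_lt ENat.one_lt_top

end DominationGame

/-- A tree `T` has no perfect matching if and only if Staller has a winning
strategy in the Staller-start Maker–Breaker domination game on `T`, i.e.
`γ'_SMB(T) < ∞`. -/
theorem stmt_13 {V : Type} [Fintype V] (T : SimpleGraph V) (hT : T.IsTree) :
    (¬ ∃ M : T.Subgraph, M.IsPerfectMatching) ↔ gammaSMB' T < ⊤ := by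
  constructor
  · intro hno
    have := hT.isAcyclic.mbVal_closedNbhdHypOn_lt_top univ fun ⟨M, hM, hverts⟩ =>
      hno ⟨M, hM, SimpleGraph.Subgraph.isSpanning_iff.mpr (by simpa using hverts)⟩
    rwa [closedNbhdHypOn_univ, compl_univ] at this
  · rintro hlt ⟨M, hM⟩
    obtain ⟨f, hf, hadj⟩ := hM.exists_involutive_adj
    have hpair : ∀ e ∈ nbhdHyp T, ∃ v ∈ e, f v ∈ e := by
      rintro _ ⟨v, rfl⟩
      exact ⟨v, mem_closedNbhdFinset.mpr (.inl rfl),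
        mem_closedNbhdFinset.mpr (.inr (M.adj_sub (hadj v)))⟩
    exact hlt.ne <| mbVal_eq_top_of_pairing hf (fun v => (M.adj_sub (hadj v)).ne')
      hpair (disjoint_empty_left ∅) (by simp)
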